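/- Let 0 < d < D be integers, let L₁ be a d-flat in ℝ^D, let x ∈ L₁, let 0 < w ≤ r, and let Ω ⊆ ℝ^D be a set such that Ω ∩ B(x,r) = T(L₁,w) ∩ B(x,r). Then the infimum over all d-flats L of ℝ^D of sup_{y ∈ Ω ∩ B(x,r)} dist(y,L) equals w. Consequently the quantity β_∞(x,r) := (1/r) · inf_L sup_{y ∈ Ω ∩ B(x,r)} dist(y,L) equals w/r, which is a decreasing function of r on the range where the hypothesis holds. -/

import Mathlib

/-!
The flat `L₁` itself gives `sup ≤ w`. Conversely, the sphere `S(x,w)` lies in `T(L₁,w) ∩ B(x,r)`,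
and any `d`-flat `L` with `d < D` has a unit normal `u`; for `p ∈ L`, one of the two points
`y = x ± w u` has `|⟪y - p, u⟫| ≥ w`, and this inner product does not depend on the choice of `p`
in `L`, so `dist(y, L) ≥ w`.
-/

open MeasureTheory Metric

def tube {E : Type*} [PseudoMetricSpace E] (L : Set E) (w : ℝ) : Set E :=
  {y | infDist y L ≤ w}

open scoped RealInnerProductSpace

section InnerProductSpace

variable {E : Type*} [NormedAddCommGroup E] [InnerProductSpace ℝ E]

lemma exists_norm_eq_one_mem_orthogonal {K : Submodule ℝ E} [K.HasOrthogonalProjection]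
    (hK : K ≠ ⊤) : ∃ u ∈ Kᗮ, ‖u‖ = 1 := by
  obtain ⟨v, hv, hv0⟩ := Submodule.exists_mem_ne_zero_of_ne_bot
    (mt Submodule.orthogonal_eq_bot_iff.mp hK)
  exact ⟨‖v‖⁻¹ • v, Kᗮ.smul_mem _ hv, norm_smul_inv_norm hv0⟩

lemma abs_inner_sub_le_infDist {L : AffineSubspace ℝ E} {p u : E} (hp : p ∈ L)
    (hu : u ∈ L.directionᗮ) (hu1 : ‖u‖ = 1) (y : E) :
    |⟪y - p, u⟫| ≤ infDist y L := by
  refine (le_infDist ⟨p, hp⟩).2 fun q hq => ?_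
  have hqp : ⟪q - p, u⟫ = 0 := hu _ (L.vsub_mem_direction hq hp)
  calc |⟪y - p, u⟫| = |⟪y - q, u⟫| := by
        rw [← sub_add_sub_cancel y q p, inner_add_left, hqp, add_zero]
    _ ≤ ‖y - q‖ * ‖u‖ := abs_real_inner_le_norm _ _
    _ = dist y q := by rw [hu1, mul_one, dist_eq_norm]

lemma le_abs_add_or_le_abs_sub (c w : ℝ) : w ≤ |c + w| ∨ w ≤ |c - w| := by
  rcases le_total 0 c with hc | hc
  · exact .inl (le_abs.2 (.inl (by linarith)))
  · exact .inr (le_abs.2 (.inr (by linarith)))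

lemma exists_mem_sphere_le_infDist {L : AffineSubspace ℝ E} [L.direction.HasOrthogonalProjection]
    (hL : L.direction ≠ ⊤) (hne : (L : Set E).Nonempty) (x : E) {w : ℝ} (hw : 0 ≤ w) :
    ∃ y ∈ sphere x w, w ≤ infDist y L := by
  obtain ⟨p, hp⟩ := hne
  obtain ⟨u, hu, hu1⟩ := exists_norm_eq_one_mem_orthogonal hL
  have hsph : ∀ t : ℝ, |t| = w → x + t • u ∈ sphere x w := fun t ht => by
    rw [mem_sphere, dist_eq_norm, add_sub_cancel_left, norm_smul, hu1, mul_one,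
      Real.norm_eq_abs, ht]
  have hinner : ∀ t : ℝ, ⟪x + t • u - p, u⟫ = ⟪x - p, u⟫ + t := fun t => by
    rw [add_sub_right_comm, inner_add_left, real_inner_smul_left, real_inner_self_eq_norm_sq,
      hu1, one_pow, mul_one]
  have hdist := abs_inner_sub_le_infDist hp hu hu1
  rcases le_abs_add_or_le_abs_sub ⟪x - p, u⟫ w with h | h
  · exact ⟨x + w • u, hsph w (abs_of_nonneg hw), h.trans (hinner w ▸ hdist _)⟩
  · refine ⟨x + (-w) • u, hsph (-w) (by rw [abs_neg, abs_of_nonneg hw]), h.trans ?_⟩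
    simpa only [hinner, ← sub_eq_add_neg] using hdist (x + (-w) • u)

lemma le_sSup_infDist_image_of_sphere_subset {L : AffineSubspace ℝ E}
    [L.direction.HasOrthogonalProjection] (hL : L.direction ≠ ⊤) (hne : (L : Set E).Nonempty)
    {A : Set E} (hA : Bornology.IsBounded A) {x : E} {w : ℝ} (hw : 0 ≤ w)
    (hsph : sphere x w ⊆ A) :
    w ≤ sSup ((fun y => infDist y (L : Set E)) '' A) := by
  obtain ⟨y, hy, hwy⟩ := exists_mem_sphere_le_infDist hL hne x hw
  exact hwy.trans (le_csSup ((lipschitz_infDist_pt _).isBounded_image hA).bddAbove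
    (Set.mem_image_of_mem _ (hsph hy)))

end InnerProductSpace

theorem infFlat_sSup_dist_tube_eq (d D : ℕ) (hdD : d < D)
    (L₁ : AffineSubspace ℝ (EuclideanSpace ℝ (Fin D)))
    (hL₁d : Module.finrank ℝ L₁.direction = d)
    (x : EuclideanSpace ℝ (Fin D)) (hx : x ∈ L₁)
    (w r : ℝ) (hw : 0 < w) (hwr : w ≤ r)
    (Ω : Set (EuclideanSpace ℝ (Fin D)))
    (hΩ : Ω ∩ closedBall x r =
      tube (L₁ : Set (EuclideanSpace ℝ (Fin D))) w ∩ closedBall x r) :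
    sInf { s : ℝ | ∃ L : AffineSubspace ℝ (EuclideanSpace ℝ (Fin D)),
        Module.finrank ℝ L.direction = d ∧
        (L : Set (EuclideanSpace ℝ (Fin D))).Nonempty ∧
        s = sSup ((fun y => infDist y (L : Set (EuclideanSpace ℝ (Fin D)))) ''
          (Ω ∩ closedBall x r)) } = w ∧
    (1 / r) * sInf { s : ℝ | ∃ L : AffineSubspace ℝ (EuclideanSpace ℝ (Fin D)),
        Module.finrank ℝ L.direction = d ∧
        (L : Set (EuclideanSpace ℝ (Fin D))).Nonempty ∧
        s = sSup ((fun y => infDist y (L : Set (EuclideanSpace ℝ (Fin D)))) ''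
          (Ω ∩ closedBall x r)) } = w / r := by
  set A := Ω ∩ closedBall x r
  have hA_tube : A ⊆ tube (L₁ : Set (EuclideanSpace ℝ (Fin D))) w :=
    hΩ ▸ Set.inter_subset_left
  have hxA : x ∈ A := hΩ ▸
    ⟨(infDist_zero_of_mem hx).trans_le hw.le, mem_closedBall_self (hw.le.trans hwr)⟩
  have hsph : sphere x w ⊆ A := fun y hy => hΩ ▸
    ⟨(infDist_le_dist_of_mem hx).trans (mem_sphere.1 hy).le,
      closedBall_subset_closedBall hwr (sphere_subset_closedBall hy)⟩
  have hlow : ∀ L : AffineSubspace ℝ (EuclideanSpace ℝ (Fin D)),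
      Module.finrank ℝ L.direction = d → (L : Set (EuclideanSpace ℝ (Fin D))).Nonempty →
      w ≤ sSup ((fun y => infDist y (L : Set (EuclideanSpace ℝ (Fin D)))) '' A) :=
    fun L hLd hne => le_sSup_infDist_image_of_sphere_subset
      (Submodule.lt_top_of_finrank_lt_finrank (by rwa [hLd, finrank_euclideanSpace_fin])).ne hne
      (isBounded_closedBall.subset Set.inter_subset_right) hw.le hsph
  have hL₁ : sSup ((fun y => infDist y (L₁ : Set (EuclideanSpace ℝ (Fin D)))) '' A) = w :=
    le_antisymm (csSup_le ⟨_, Set.mem_image_of_mem _ hxA⟩ (Set.forall_mem_image.2 hA_tube))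
      (hlow L₁ hL₁d ⟨x, hx⟩)
  have hinf : sInf { s : ℝ | ∃ L : AffineSubspace ℝ (EuclideanSpace ℝ (Fin D)),
      Module.finrank ℝ L.direction = d ∧ (L : Set (EuclideanSpace ℝ (Fin D))).Nonempty ∧
      s = sSup ((fun y => infDist y (L : Set (EuclideanSpace ℝ (Fin D)))) '' A) } = w :=
    IsLeast.csInf_eq ⟨⟨L₁, hL₁d, ⟨x, hx⟩, hL₁.symm⟩, by
      rintro _ ⟨L, hLd, hne, rfl⟩
      exact hlow L hLd hne⟩
  exact ⟨hinf, by rw [hinf, one_div_mul_eq_div]⟩
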